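/- Under the SAEF-SGD-with-momentum dynamics with learning rates 0 < η_t ≤ η_max, for every β₁ with 0 < β₁ < δ/(1−δ) and every t ≥ 0: E‖Δ^k_{t+1}‖² ≤ [(1 + 1/β₁)/(1 − (1−δ)(1+β₁))] · η_max²(M² + σ²)/(1−μ)². -/

import Mathlib

/-!
The momentum and the local update obey pointwise affine recursions with contraction factor
below one: `‖m_{t+1}‖² ≤ μ‖m_t‖² + ‖g_t‖²/(1-μ)` by convexity of `‖·‖²`, and
`‖Δ_{t+2}‖² ≤ (1-δ)(1+β₁)‖Δ_{t+1}‖² + (1+1/β₁) η_{t+1}² ‖m_{t+2}‖²` by Young's inequality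
and the compressor bound. The expectation of such a recursion `x ↦ ρx + b` stays below its
fixed point `b/(1-ρ)`. The compressor need not be measurable, so `‖Δ‖²` need not be
integrable; it is dominated pointwise by an integrable solution of the recursion, and that is
what gets integrated.
-/

open MeasureTheory

lemma add_sq_le_one_add_mul_sq_add (x y : ℝ) {β : ℝ} (hβ : 0 < β) :
    (x + y) ^ 2 ≤ (1 + β) * x ^ 2 + (1 + 1 / β) * y ^ 2 := by
  have key : β * ((1 + β) * x ^ 2 + (1 + 1 / β) * y ^ 2 - (x + y) ^ 2)
      = (β * x - y) ^ 2 := by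
    field_simp; ring
  nlinarith [sq_nonneg (β * x - y)]

lemma mul_add_sq_le_mul_sq_add_sq_div (x y : ℝ) {μ : ℝ} (hμ0 : 0 ≤ μ) (hμ1 : μ < 1) :
    (μ * x + y) ^ 2 ≤ μ * x ^ 2 + y ^ 2 / (1 - μ) := by
  have key : (1 - μ) * (μ * x ^ 2 + y ^ 2 / (1 - μ) - (μ * x + y) ^ 2)
      = μ * ((1 - μ) * x - y) ^ 2 := by
    have : 1 - μ ≠ 0 := by linarith
    field_simp; ring
  nlinarith [mul_nonneg hμ0 (sq_nonneg ((1 - μ) * x - y))]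

section Norms

variable {E : Type*} [SeminormedAddCommGroup E]

lemma norm_add_sq_le_one_add_mul (a b : E) {β : ℝ} (hβ : 0 < β) :
    ‖a + b‖ ^ 2 ≤ (1 + β) * ‖a‖ ^ 2 + (1 + 1 / β) * ‖b‖ ^ 2 :=
  (pow_le_pow_left₀ (norm_nonneg _) (norm_add_le a b) 2).trans
    (add_sq_le_one_add_mul_sq_add _ _ hβ)

lemma norm_smul_add_sq_le [NormedSpace ℝ E] (a b : E) {μ : ℝ} (hμ0 : 0 ≤ μ) (hμ1 : μ < 1) :
    ‖μ • a + b‖ ^ 2 ≤ μ * ‖a‖ ^ 2 + ‖b‖ ^ 2 / (1 - μ) := by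
  have h : ‖μ • a + b‖ ≤ μ * ‖a‖ + ‖b‖ :=
    (norm_add_le _ _).trans_eq (by rw [norm_smul, Real.norm_of_nonneg hμ0])
  exact (pow_le_pow_left₀ (norm_nonneg _) h 2).trans
    (mul_add_sq_le_mul_sq_add_sq_div _ _ hμ0 hμ1)

end Norms

lemma le_div_one_sub_of_le_mul_add {a : ℕ → ℝ} {ρ b : ℝ} (hρ0 : 0 ≤ ρ) (hρ1 : ρ < 1)
    (hb : 0 ≤ b) (h0 : a 0 ≤ b) (h : ∀ s, a (s + 1) ≤ ρ * a s + b) (s : ℕ) :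
    a s ≤ b / (1 - ρ) := by
  have h1ρ : 0 < 1 - ρ := by linarith
  induction s with
  | zero => exact h0.trans (le_div_self hb h1ρ (by linarith))
  | succ s ih =>
    calc a (s + 1) ≤ ρ * a s + b := h s
      _ ≤ ρ * (b / (1 - ρ)) + b := by gcongr
      _ = b / (1 - ρ) := by field_simp; ring

section

variable {Ω : Type*} [MeasurableSpace Ω] {P : Measure Ω}

lemma integral_le_div_one_sub_of_le_mul_add {f u : ℕ → Ω → ℝ} {ρ b : ℝ}
    (hρ0 : 0 ≤ ρ) (hρ1 : ρ < 1) (hf : ∀ s ω, 0 ≤ f s ω)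
    (hu : ∀ s, Integrable (u s) P) (hub : ∀ s, ∫ ω, u s ω ∂P ≤ b)
    (h0 : ∀ ω, f 0 ω ≤ u 0 ω) (h : ∀ s ω, f (s + 1) ω ≤ ρ * f s ω + u (s + 1) ω) (s : ℕ) :
    ∫ ω, f s ω ∂P ≤ b / (1 - ρ) := by
  obtain ⟨D, hD0, hD⟩ : ∃ D : ℕ → Ω → ℝ,
      D 0 = u 0 ∧ ∀ s, D (s + 1) = fun ω => ρ * D s ω + u (s + 1) ω :=
    ⟨fun s => Nat.rec (u 0) (fun s Ds ω => ρ * Ds ω + u (s + 1) ω) s, rfl, fun _ => rfl⟩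
  have hD_int : ∀ s, Integrable (D s) P := by
    intro s
    induction s with
    | zero => exact hD0 ▸ hu 0
    | succ s ih => exact hD s ▸ (ih.const_mul ρ).add (hu (s + 1))
  have hfD : ∀ s ω, f s ω ≤ D s ω := by
    intro s
    induction s with
    | zero => exact fun ω => hD0 ▸ h0 ω
    | succ s ih =>
      exact fun ω => (h s ω).trans (by rw [hD s]; dsimp only; gcongr; exact ih ω)
  have hb : 0 ≤ b := (integral_nonneg fun ω => (hf 0 ω).trans (h0 ω)).trans (hub 0)
  have hD_integral : ∀ s, ∫ ω, D (s + 1) ω ∂P ≤ ρ * ∫ ω, D s ω ∂P + b := by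
    intro s
    rw [hD s, integral_add ((hD_int s).const_mul ρ) (hu (s + 1)), integral_const_mul]
    linarith [hub (s + 1)]
  calc ∫ ω, f s ω ∂P ≤ ∫ ω, D s ω ∂P :=
        integral_mono_of_nonneg (.of_forall (hf s)) (hD_int s) (.of_forall (hfD s))
    _ ≤ b / (1 - ρ) :=
        le_div_one_sub_of_le_mul_add (a := fun s => ∫ ω, D s ω ∂P) hρ0 hρ1 hb (hD0 ▸ hub 0)
          hD_integral s

variable {E : Type*} [NormedAddCommGroup E] [NormedSpace ℝ E]

section Momentum

variable {μ : ℝ} {g m : ℕ → Ω → E}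
  (hm0 : ∀ ω, m 0 ω = 0) (hm : ∀ t ω, m (t + 1) ω = μ • m t ω + g t ω)
include hm0 hm

lemma memLp_momentum {p : ENNReal} (hg : ∀ t, MemLp (g t) p P) (s : ℕ) :
    MemLp (m s) p P := by
  induction s with
  | zero => exact (funext hm0 : m 0 = 0) ▸ MemLp.zero
  | succ s ih => exact (funext (hm s)).symm ▸ (ih.const_smul μ).add (hg s)

lemma integral_norm_sq_momentum_le {G : ℝ} (hμ0 : 0 ≤ μ) (hμ1 : μ < 1)
    (hg : ∀ t, MemLp (g t) 2 P) (hgG : ∀ t, ∫ ω, ‖g t ω‖ ^ 2 ∂P ≤ G) (s : ℕ) :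
    ∫ ω, ‖m (s + 1) ω‖ ^ 2 ∂P ≤ G / (1 - μ) ^ 2 := by
  have h1μ : 0 < 1 - μ := by linarith
  rw [sq, ← div_div]
  refine integral_le_div_one_sub_of_le_mul_add (f := fun s ω => ‖m (s + 1) ω‖ ^ 2)
    (u := fun s ω => ‖g s ω‖ ^ 2 / (1 - μ)) hμ0 hμ1 (fun _ _ => sq_nonneg _)
    (fun s => (hg s).norm.integrable_sq.div_const _)
    (fun s => by rw [integral_div]; gcongr; exact hgG s) (fun ω => ?_) (fun s ω => ?_) s
  · rw [hm, hm0, smul_zero, zero_add]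
    exact le_div_self (sq_nonneg _) h1μ (by linarith)
  · rw [hm (s + 1) ω]
    exact norm_smul_add_sq_le _ _ hμ0 hμ1

end Momentum

lemma integral_norm_sq_local_update_le {C : E → E} {δ β ηmax B : ℝ}
    (hC : ∀ v, ‖C v - v‖ ^ 2 ≤ (1 - δ) * ‖v‖ ^ 2) (hδ1 : δ < 1) (hβ : 0 < β)
    (hρ1 : (1 - δ) * (1 + β) < 1)
    {η : ℕ → ℝ} (hη0 : ∀ t, 0 ≤ η t) (hηmax : ∀ t, η t ≤ ηmax)
    {m e Δ : ℕ → Ω → E} (hmL2 : ∀ t, MemLp (m t) 2 P)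
    (hmB : ∀ t, ∫ ω, ‖m (t + 1) ω‖ ^ 2 ∂P ≤ B) (he0 : ∀ ω, e 0 ω = 0)
    (hΔ : ∀ t ω, Δ (t + 1) ω = e t ω + η t • m (t + 1) ω)
    (he : ∀ t ω, e (t + 1) ω = Δ (t + 1) ω - C (Δ (t + 1) ω)) (t : ℕ) :
    ∫ ω, ‖Δ (t + 1) ω‖ ^ 2 ∂P
      ≤ (1 + 1 / β) * ηmax ^ 2 * B / (1 - (1 - δ) * (1 + β)) := by
  have hsmul (c : ℝ) (v : E) : ‖c • v‖ ^ 2 = c ^ 2 * ‖v‖ ^ 2 := by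
    rw [norm_smul, mul_pow, Real.norm_eq_abs, sq_abs]
  refine integral_le_div_one_sub_of_le_mul_add (f := fun s ω => ‖Δ (s + 1) ω‖ ^ 2)
    (u := fun s ω => (1 + 1 / β) * η s ^ 2 * ‖m (s + 1) ω‖ ^ 2)
    (mul_nonneg (by linarith) (by linarith)) hρ1 (fun _ _ => sq_nonneg _)
    (fun s => (hmL2 (s + 1)).norm.integrable_sq.const_mul _)
    (fun s => ?_) (fun ω => ?_) (fun s ω => ?_) t
  · rw [integral_const_mul]
    gcongr
    exacts [hη0 s, hηmax s, hmB s]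
  · rw [hΔ, he0, zero_add, hsmul, mul_assoc]
    have hc : 1 ≤ 1 + 1 / β := le_add_of_nonneg_right (by positivity)
    exact le_mul_of_one_le_left (by positivity) hc
  · calc ‖Δ (s + 1 + 1) ω‖ ^ 2
        ≤ (1 + β) * ‖e (s + 1) ω‖ ^ 2
            + (1 + 1 / β) * ‖η (s + 1) • m (s + 2) ω‖ ^ 2 := by
          rw [hΔ]; exact norm_add_sq_le_one_add_mul _ _ hβ
      _ ≤ (1 + β) * ((1 - δ) * ‖Δ (s + 1) ω‖ ^ 2)
            + (1 + 1 / β) * (η (s + 1) ^ 2 * ‖m (s + 2) ω‖ ^ 2) := by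
          rw [he, norm_sub_rev, hsmul]; gcongr; exact hC _
      _ = _ := by ring

end

theorem local_update_second_moment_bound_general
    {Ω : Type*} [MeasurableSpace Ω] (P : Measure Ω) {d K : ℕ}
    (μ M σ δ ηmax : ℝ) (hμ0 : 0 ≤ μ) (hμ1 : μ < 1) (hδ1 : δ < 1)
    (Co : EuclideanSpace ℝ (Fin d) → EuclideanSpace ℝ (Fin d))
    (hCo : ∀ v, ‖Co v - v‖ ^ 2 ≤ (1 - δ) * ‖v‖ ^ 2)
    (η : ℕ → ℝ) (hη0 : ∀ t, 0 < η t) (hηmax : ∀ t, η t ≤ ηmax)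
    (g m e : Fin K → ℕ → Ω → EuclideanSpace ℝ (Fin d))
    (hgL2 : ∀ k t, MemLp (g k t) 2 P)
    (hgbound : ∀ k t, ∫ ω, ‖g k t ω‖ ^ 2 ∂P ≤ M ^ 2 + σ ^ 2)
    (hm0 : ∀ k ω, m k 0 ω = 0) (he0 : ∀ k ω, e k 0 ω = 0)
    (hm : ∀ k t ω, m k (t + 1) ω = μ • m k t ω + g k t ω)
    (Δ : Fin K → ℕ → Ω → EuclideanSpace ℝ (Fin d))
    (hΔ : ∀ k t ω, Δ k (t + 1) ω = e k t ω + η t • m k (t + 1) ω)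
    (he : ∀ k t ω, e k (t + 1) ω = Δ k (t + 1) ω - Co (Δ k (t + 1) ω)) :
    ∀ β₁ : ℝ, 0 < β₁ → β₁ < δ / (1 - δ) → ∀ k t,
      ∫ ω, ‖Δ k (t + 1) ω‖ ^ 2 ∂P
        ≤ ((1 + 1 / β₁) / (1 - (1 - δ) * (1 + β₁)))
            * (ηmax ^ 2 * (M ^ 2 + σ ^ 2) / (1 - μ) ^ 2) := by
  intro β₁ hβ₁ hβ₁δ k t
  have h1δ : 0 < 1 - δ := by linarith
  have hρ1 : (1 - δ) * (1 + β₁) < 1 := by nlinarith [(lt_div_iff₀ h1δ).mp hβ₁δ]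
  have hmom := integral_norm_sq_momentum_le (hm0 k) (hm k) hμ0 hμ1 (hgL2 k) (hgbound k)
  calc ∫ ω, ‖Δ k (t + 1) ω‖ ^ 2 ∂P
      ≤ (1 + 1 / β₁) * ηmax ^ 2 * ((M ^ 2 + σ ^ 2) / (1 - μ) ^ 2)
          / (1 - (1 - δ) * (1 + β₁)) :=
        integral_norm_sq_local_update_le hCo hδ1 hβ₁ hρ1 (fun s => (hη0 s).le) hηmax
          (memLp_momentum (hm0 k) (hm k) (hgL2 k)) hmom (he0 k) (hΔ k) (he k) t
    _ = _ := by ring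

/-- Bound on the local update `Δ^k_{t+1} = e^k_t + η_t m^k_{t+1}` of SAEF-SGD with
momentum: for every `β₁ ∈ (0, δ/(1−δ))` and every `t`,
`E‖Δ^k_{t+1}‖² ≤ [(1+1/β₁)/(1−(1−δ)(1+β₁))]·η_max²(M²+σ²)/(1−μ)²`. -/
theorem local_update_second_moment_bound
    {Ω : Type*} [MeasurableSpace Ω] (P : Measure Ω) [IsProbabilityMeasure P]
    {d K : ℕ} (hK : 1 ≤ K)
    (μ M σ δ ηmax : ℝ) (hμ0 : 0 ≤ μ) (hμ1 : μ < 1)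
    (hM : 0 ≤ M) (hσ : 0 ≤ σ) (hδ0 : 0 < δ) (hδ1 : δ < 1)
    (Co : EuclideanSpace ℝ (Fin d) → EuclideanSpace ℝ (Fin d))
    (hCo : ∀ v, ‖Co v - v‖ ^ 2 ≤ (1 - δ) * ‖v‖ ^ 2)
    (η : ℕ → ℝ) (hη0 : ∀ t, 0 < η t) (hηmax : ∀ t, η t ≤ ηmax)
    (g m e : Fin K → ℕ → Ω → EuclideanSpace ℝ (Fin d))
    (hgL2 : ∀ k t, MemLp (g k t) 2 P)
    (hgbound : ∀ k t, ∫ ω, ‖g k t ω‖ ^ 2 ∂P ≤ M ^ 2 + σ ^ 2)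
    (hm0 : ∀ k ω, m k 0 ω = 0) (he0 : ∀ k ω, e k 0 ω = 0)
    (hm : ∀ k t ω, m k (t + 1) ω = μ • m k t ω + g k t ω)
    (Δ : Fin K → ℕ → Ω → EuclideanSpace ℝ (Fin d))
    (hΔ : ∀ k t ω, Δ k (t + 1) ω = e k t ω + η t • m k (t + 1) ω)
    (he : ∀ k t ω, e k (t + 1) ω = Δ k (t + 1) ω - Co (Δ k (t + 1) ω)) :
    ∀ β₁ : ℝ, 0 < β₁ → β₁ < δ / (1 - δ) → ∀ k t,
      ∫ ω, ‖Δ k (t + 1) ω‖ ^ 2 ∂P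
        ≤ ((1 + 1 / β₁) / (1 - (1 - δ) * (1 + β₁)))
            * (ηmax ^ 2 * (M ^ 2 + σ ^ 2) / (1 - μ) ^ 2) :=
  local_update_second_moment_bound_general P μ M σ δ ηmax hμ0 hμ1 hδ1 Co hCo η hη0 hηmax g m e hgL2
    hgbound hm0 he0 hm Δ hΔ he
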